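/- arXiv:1701.04399 — 2 statements merged into one kernel-verified Lean document; each statement's English description precedes it below -/
import Mathlib

section
/- Let m, n ∈ 2ℕ. In the DR(1) problem, if for some (i,j) ∈ I both r_j > 0 and r_{j+1} > 0, then the solution is not unique: from any solution ξ one can construct a different solution ξ' by a 2×2 switch across two blocks in the strip. -/
open Finset

/-- Corner set `C(m,n,2)`: points of `[m]×[n]` with both coordinates odd. -/
def cornerSet (m n : ℕ) : Finset (ℕ × ℕ) :=
  ((Finset.Icc 1 m) ×ˢ (Finset.Icc 1 n)).filter (fun p => p.1 % 2 = 1 ∧ p.2 % 2 = 1)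

/-- The 2×2 block with lower-left corner `(i,j)`. -/
def block2 (i j : ℕ) : Finset (ℕ × ℕ) :=
  {(i, j), (i + 1, j), (i, j + 1), (i + 1, j + 1)}

/-- `G(I)`: union of the blocks with corners in `I`. -/
def gridG (I : Finset (ℕ × ℕ)) : Finset (ℕ × ℕ) :=
  I.biUnion (fun p => block2 p.1 p.2)

/-- `ρ_j(i) = |([i]×{j}) ∩ I|`. -/
def rhoI (I : Finset (ℕ × ℕ)) (j i : ℕ) : ℕ :=
  (I.filter (fun p => p.1 ≤ i ∧ p.2 = j)).card

/-- `σ_i(j) = |({i}×[j]) ∩ I|`. -/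
def sigmaI (I : Finset (ℕ × ℕ)) (i j : ℕ) : ℕ :=
  (I.filter (fun p => p.1 = i ∧ p.2 ≤ j)).card

/-- Projection of `I` onto the second coordinate. -/
def PiY (I : Finset (ℕ × ℕ)) : Finset ℕ := I.image Prod.snd

/-- Projection of `I` onto the first coordinate. -/
def PiX (I : Finset (ℕ × ℕ)) : Finset ℕ := I.image Prod.fst

/-- A solution of the single-graylevel problem `DR(ν)` on `G(I)`:
a 0/1-assignment with prescribed row and column sums and exactly `ν` ones per block. -/
def IsDRSol (I : Finset (ℕ × ℕ)) (r c : ℕ → ℕ) (ν : ℕ) (ξ : ℕ × ℕ → ℕ) : Prop :=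
  (∀ p ∈ gridG I, ξ p ≤ 1) ∧
  (∀ j ∈ PiY I, ∀ l ∈ ({0, 1} : Finset ℕ),
    ∑ p ∈ (gridG I).filter (fun q => q.2 = j + l), ξ p = r (j + l)) ∧
  (∀ i ∈ PiX I, ∀ l ∈ ({0, 1} : Finset ℕ),
    ∑ p ∈ (gridG I).filter (fun q => q.1 = i + l), ξ p = c (i + l)) ∧
  (∀ p ∈ I, ∑ q ∈ block2 p.1 p.2, ξ q = ν)

lemma mem_block2' {q : ℕ × ℕ} {i j : ℕ} :
    q ∈ block2 i j ↔ q = (i,j) ∨ q = (i+1,j) ∨ q = (i,j+1) ∨ q = (i+1,j+1) := by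
  simp [block2]

lemma block2_sum' (f : ℕ × ℕ → ℕ) (i j : ℕ) :
    ∑ q ∈ block2 i j, f q = f (i,j) + f (i+1,j) + f (i,j+1) + f (i+1,j+1) := by
  rw [block2]
  rw [Finset.sum_insert (by simp), Finset.sum_insert (by simp),
      Finset.sum_insert (by simp), Finset.sum_singleton]
  ring

lemma sum_swap2' {f g : ℕ × ℕ → ℕ} {S : Finset (ℕ × ℕ)} {u v : ℕ × ℕ}
    (hu : u ∈ S) (hv : v ∈ S) (huv : u ≠ v)
    (h1 : f u + f v = g u + g v)
    (h2 : ∀ q ∈ S, q ≠ u → q ≠ v → f q = g q) :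
    ∑ q ∈ S, f q = ∑ q ∈ S, g q := by
  have hv' : v ∈ S.erase u := Finset.mem_erase.mpr ⟨fun h => huv h.symm, hv⟩
  rw [← Finset.add_sum_erase _ f hu, ← Finset.add_sum_erase _ g hu,
      ← Finset.add_sum_erase _ f hv', ← Finset.add_sum_erase _ g hv']
  have h3 : ∑ q ∈ (S.erase u).erase v, f q = ∑ q ∈ (S.erase u).erase v, g q := by
    refine Finset.sum_congr rfl fun q hq => ?_
    have h4 := Finset.mem_erase.mp hq
    have h5 := Finset.mem_erase.mp h4.2
    exact h2 q h5.2 h5.1 h4.1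
  omega

/-- Non-uniqueness in `DR(1)`: if `r_j > 0` and `r_{j+1} > 0` for some `(i,j) ∈ I`, then
from any solution one can construct a different solution. -/
theorem dr1_not_unique (m n : ℕ) (hm2 : m % 2 = 0) (hn2 : n % 2 = 0)
    (hm : 0 < m) (hn : 0 < n)
    (I : Finset (ℕ × ℕ)) (hI : I ⊆ cornerSet m n) (r c : ℕ → ℕ)
    (p : ℕ × ℕ) (hp : p ∈ I) (hrj : 0 < r p.2) (hrj1 : 0 < r (p.2 + 1))
    (ξ : ℕ × ℕ → ℕ) (hξ : IsDRSol I r c 1 ξ) :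
    ∃ ξ' : ℕ × ℕ → ℕ, IsDRSol I r c 1 ξ' ∧ ∃ q ∈ gridG I, ξ q ≠ ξ' q := by
  obtain ⟨h01, hrow, hcol, hblk⟩ := hξ
  have hodd : ∀ q ∈ I, q.1 % 2 = 1 ∧ q.2 % 2 = 1 :=
    fun q hq => (Finset.mem_filter.mp (hI hq)).2
  have hpodd : p.2 % 2 = 1 := (hodd p hp).2
  have hjY : p.2 ∈ PiY I := Finset.mem_image.mpr ⟨p, hp, rfl⟩
  -- find the cell x = (a, p.2) with value 1 in row p.2
  have hr0 := hrow p.2 hjY 0 (by simp)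
  have hr1 := hrow p.2 hjY 1 (by simp)
  norm_num at hr0 hr1
  obtain ⟨x, hxmem, hxne⟩ :=
    Finset.exists_ne_zero_of_sum_ne_zero (by rw [hr0]; omega :
      ∑ q ∈ (gridG I).filter (fun q => q.2 = p.2), ξ q ≠ 0)
  obtain ⟨y, hymem, hyne⟩ :=
    Finset.exists_ne_zero_of_sum_ne_zero (by rw [hr1]; omega :
      ∑ q ∈ (gridG I).filter (fun q => q.2 = p.2 + 1), ξ q ≠ 0)
  obtain ⟨a, ja⟩ := x
  obtain ⟨b, jb⟩ := y
  obtain ⟨hxG, hx2⟩ := Finset.mem_filter.mp hxmem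
  obtain ⟨hyG, hy2⟩ := Finset.mem_filter.mp hymem
  simp only at hx2 hy2
  subst hx2; subst hy2
  obtain ⟨pA, hpA, hxA⟩ := Finset.mem_biUnion.mp hxG
  obtain ⟨pB, hpB, hyB⟩ := Finset.mem_biUnion.mp hyG
  have hpA1 : pA.1 % 2 = 1 := (hodd pA hpA).1
  have hpA2 : pA.2 % 2 = 1 := (hodd pA hpA).2
  have hpB1 : pB.1 % 2 = 1 := (hodd pB hpB).1
  have hpB2 : pB.2 % 2 = 1 := (hodd pB hpB).2
  have aA := mem_block2'.mp hxA
  simp only [Prod.mk.injEq] at aA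
  have bB := mem_block2'.mp hyB
  simp only [Prod.mk.injEq] at bB
  have hA2 : pA.2 = p.2 := by omega
  have hB2 : pB.2 = p.2 := by omega
  have ha : a = pA.1 ∨ a = pA.1 + 1 := by omega
  have hb : b = pB.1 ∨ b = pB.1 + 1 := by omega
  -- block sums
  have sA := hblk pA hpA
  rw [block2_sum', hA2] at sA
  have sB := hblk pB hpB
  rw [block2_sum', hB2] at sB
  have hx1 : ξ (a, p.2) = 1 := by
    have := h01 _ hxG; omega
  have hy1 : ξ (b, p.2 + 1) = 1 := by
    have := h01 _ hyG; omega
  have hxup0 : ξ (a, p.2 + 1) = 0 := by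
    rcases ha with h | h <;> rw [h] at hx1 ⊢ <;> omega
  have hydown0 : ξ (b, p.2) = 0 := by
    rcases hb with h | h <;> rw [h] at hy1 ⊢ <;> omega
  have hab : a ≠ b := by
    intro h; rw [h] at hxup0; omega
  have hABne1 : pA.1 ≠ pB.1 := by
    intro h
    have hy1' := hy1
    have hx1' := hx1
    rcases ha with h' | h' <;> rcases hb with h'' | h'' <;>
      rw [h'] at hx1' <;> rw [h'', ← h] at hy1' <;> omega
  have hABne : pA ≠ pB := fun h => hABne1 (by rw [h])
  -- every block containing one of the special cells is pA (resp. pB)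
  have KA : ∀ p' ∈ I, ∀ d : ℕ, d ≤ 1 → (a, p.2 + d) ∈ block2 p'.1 p'.2 → p' = pA := by
    intro p' hp' d hd hmem
    have h1 := hodd p' hp'
    have h2 := mem_block2'.mp hmem
    simp only [Prod.mk.injEq] at h2
    exact Prod.ext_iff.mpr ⟨by omega, by omega⟩
  have KB : ∀ p' ∈ I, ∀ d : ℕ, d ≤ 1 → (b, p.2 + d) ∈ block2 p'.1 p'.2 → p' = pB := by
    intro p' hp' d hd hmem
    have h1 := hodd p' hp'
    have h2 := mem_block2'.mp hmem
    simp only [Prod.mk.injEq] at h2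
    exact Prod.ext_iff.mpr ⟨by omega, by omega⟩
  -- memberships of the four special cells in their blocks and in the grid
  have hmA0 : (a, p.2) ∈ block2 pA.1 pA.2 := hxA
  have hmA1 : (a, p.2 + 1) ∈ block2 pA.1 pA.2 := by
    rw [mem_block2']; simp only [Prod.mk.injEq]; omega
  have hmB1 : (b, p.2 + 1) ∈ block2 pB.1 pB.2 := hyB
  have hmB0 : (b, p.2) ∈ block2 pB.1 pB.2 := by
    rw [mem_block2']; simp only [Prod.mk.injEq]; omega
  have hGa0 : (a, p.2) ∈ gridG I := hxG
  have hGa1 : (a, p.2 + 1) ∈ gridG I := Finset.mem_biUnion.mpr ⟨pA, hpA, hmA1⟩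
  have hGb1 : (b, p.2 + 1) ∈ gridG I := hyG
  have hGb0 : (b, p.2) ∈ gridG I := Finset.mem_biUnion.mpr ⟨pB, hpB, hmB0⟩
  -- define the switched solution
  set ξ' : ℕ × ℕ → ℕ := fun q =>
    if q = (a, p.2) then 0 else if q = (b, p.2 + 1) then 0
    else if q = (a, p.2 + 1) then 1 else if q = (b, p.2) then 1 else ξ q
    with hξ'def
  have hv1 : ξ' (a, p.2) = 0 := by simp [hξ'def]
  have hv2 : ξ' (b, p.2 + 1) = 0 := by simp [hξ'def]
  have hv3 : ξ' (a, p.2 + 1) = 1 := by simp [hξ'def, hab]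
  have hv4 : ξ' (b, p.2) = 1 := by simp [hξ'def, Ne.symm hab]
  have hnot : ∀ q, q ≠ (a, p.2) → q ≠ (b, p.2 + 1) → q ≠ (a, p.2 + 1) → q ≠ (b, p.2) →
      ξ' q = ξ q := by
    intro q h1 h2 h3 h4
    simp only [hξ'def]
    rw [if_neg h1, if_neg h2, if_neg h3, if_neg h4]
  refine ⟨ξ', ⟨?_, ?_, ?_, ?_⟩, (a, p.2), hGa0, by rw [hx1, hv1]; omega⟩
  · -- bounds
    intro q hq
    simp only [hξ'def]
    split_ifs <;> first | omega | exact h01 q hq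
  · -- row sums
    intro j' hj' l hl
    rw [← hrow j' hj' l hl]
    by_cases hc0 : j' + l = p.2
    · refine sum_swap2' (u := (a, p.2)) (v := (b, p.2))
        (Finset.mem_filter.mpr ⟨hGa0, by simp [hc0]⟩)
        (Finset.mem_filter.mpr ⟨hGb0, by simp [hc0]⟩)
        (by simp [Prod.mk.injEq, hab])
        (by rw [hv1, hv4, hx1, hydown0]) ?_
      intro q hq hqu hqv
      have hq2 := (Finset.mem_filter.mp hq).2
      refine hnot q hqu ?_ ?_ hqv <;> rintro rfl <;> simp at hq2 <;> omega
    · by_cases hc1 : j' + l = p.2 + 1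
      · refine sum_swap2' (u := (a, p.2 + 1)) (v := (b, p.2 + 1))
          (Finset.mem_filter.mpr ⟨hGa1, by simp [hc1]⟩)
          (Finset.mem_filter.mpr ⟨hGb1, by simp [hc1]⟩)
          (by simp [Prod.mk.injEq, hab])
          (by rw [hv3, hv2, hxup0, hy1]) ?_
        intro q hq hqu hqv
        have hq2 := (Finset.mem_filter.mp hq).2
        refine hnot q ?_ hqv hqu ?_ <;> rintro rfl <;> simp at hq2 <;> omega
      · refine Finset.sum_congr rfl fun q hq => ?_
        have hq2 := (Finset.mem_filter.mp hq).2
        refine hnot q ?_ ?_ ?_ ?_ <;> rintro rfl <;> simp at hq2 <;> omega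
  · -- column sums
    intro i' hi' l hl
    rw [← hcol i' hi' l hl]
    by_cases hc0 : i' + l = a
    · refine sum_swap2' (u := (a, p.2)) (v := (a, p.2 + 1))
        (Finset.mem_filter.mpr ⟨hGa0, by simp [hc0]⟩)
        (Finset.mem_filter.mpr ⟨hGa1, by simp [hc0]⟩)
        (by simp)
        (by rw [hv1, hv3, hx1, hxup0]) ?_
      intro q hq hqu hqv
      have hq2 := (Finset.mem_filter.mp hq).2
      refine hnot q hqu ?_ hqv ?_ <;> rintro rfl <;> simp at hq2 <;> omega
    · by_cases hc1 : i' + l = b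
      · refine sum_swap2' (u := (b, p.2)) (v := (b, p.2 + 1))
          (Finset.mem_filter.mpr ⟨hGb0, by simp [hc1]⟩)
          (Finset.mem_filter.mpr ⟨hGb1, by simp [hc1]⟩)
          (by simp)
          (by rw [hv4, hv2, hydown0, hy1]) ?_
        intro q hq hqu hqv
        have hq2 := (Finset.mem_filter.mp hq).2
        refine hnot q ?_ hqv ?_ hqu <;> rintro rfl <;> simp at hq2 <;> omega
      · refine Finset.sum_congr rfl fun q hq => ?_
        have hq2 := (Finset.mem_filter.mp hq).2
        refine hnot q ?_ ?_ ?_ ?_ <;> rintro rfl <;> simp at hq2 <;> omega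
  · -- block sums
    intro p' hp'
    by_cases hcA : p' = pA
    · subst hcA
      rw [← hblk p' hp']
      refine sum_swap2' (u := (a, p.2)) (v := (a, p.2 + 1)) hmA0 hmA1
        (by simp) (by rw [hv1, hv3, hx1, hxup0]) ?_
      intro q hq hqu hqv
      refine hnot q hqu ?_ hqv ?_ <;> rintro rfl
      · exact hABne (KB p' hp' 1 le_rfl hq)
      · exact hABne (KB p' hp' 0 (by omega) hq)
    · by_cases hcB : p' = pB
      · subst hcB
        rw [← hblk p' hp']
        refine sum_swap2' (u := (b, p.2)) (v := (b, p.2 + 1)) hmB0 hmB1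
          (by simp) (by rw [hv4, hv2, hydown0, hy1]) ?_
        intro q hq hqu hqv
        refine hnot q ?_ hqv ?_ hqu <;> rintro rfl
        · exact hABne.symm (KA p' hp' 0 (by omega) hq)
        · exact hABne.symm (KA p' hp' 1 le_rfl hq)
      · rw [← hblk p' hp']
        refine Finset.sum_congr rfl fun q hq => ?_
        refine hnot q ?_ ?_ ?_ ?_ <;> rintro rfl
        · exact hcA (KA p' hp' 0 (by omega) hq)
        · exact hcB (KB p' hp' 1 le_rfl hq)
        · exact hcA (KA p' hp' 1 le_rfl hq)
        · exact hcB (KB p' hp' 0 (by omega) hq)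
end

section
/- Define the explicit assignment for DR(1): for I ⊆ C(m,n,2) with σ_i(j) = |({i}×[j]) ∩ I| and ρ_j(i) = |([i]×{j}) ∩ I|, and data satisfying r_j + r_{j+1} = ρ_j(m) and c_i + c_{i+1} = σ_i(n) for every (i,j) ∈ I, set a_{i,j} = i if σ_i(j) ≤ c_i and a_{i,j} = i+1 otherwise; set b_{i,j} = j if ρ_j(i) ≤ r_j and b_{i,j} = j+1 otherwise; and let ξ* be 1 exactly at the points (a_{i,j}, b_{i,j}), (i,j) ∈ I. Then ξ* satisfies all block constraints (one 1 per block), all row sums (Σ_{p:(p,j)∈G(I)} ξ*_{p,j} = r_j and Σ_{p:(p,j)∈G(I)} ξ*_{p,j+1} = r_{j+1} for j ∈ Π_y(I)) and all column sums (analogously with c_i, c_{i+1}). -/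
open Finset

lemma rank_count (S : Finset ℕ) : ∀ (r : ℕ), r ≤ S.card →
    (S.filter (fun t => (S.filter (· ≤ t)).card ≤ r)).card = r := by
  induction S using Finset.strongInduction with
  | _ S ih =>
    intro r hr
    rcases S.eq_empty_or_nonempty with rfl | hne
    · simp at hr; simp [hr]
    · have hMmem : S.max' hne ∈ S := S.max'_mem hne
      set M := S.max' hne with hM
      rcases eq_or_lt_of_le hr with heq | hlt
      · have hall : S.filter (fun t => (S.filter (· ≤ t)).card ≤ r) = S := by
          apply Finset.filter_true_of_mem
          intro t ht
          calc (S.filter (· ≤ t)).card ≤ S.card := Finset.card_filter_le _ _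
          _ = r := heq.symm
        rw [hall, heq]
      · have hfil : ∀ t < M, (S.erase M).filter (· ≤ t) = S.filter (· ≤ t) := by
          intro t htlt
          ext x
          simp only [Finset.mem_filter, Finset.mem_erase]
          constructor
          · rintro ⟨⟨_, hxS⟩, hxt⟩; exact ⟨hxS, hxt⟩
          · rintro ⟨hxS, hxt⟩; exact ⟨⟨by omega, hxS⟩, hxt⟩
        have hkey : S.filter (fun t => (S.filter (· ≤ t)).card ≤ r)
            = (S.erase M).filter (fun t => ((S.erase M).filter (· ≤ t)).card ≤ r) := by
          ext t
          simp only [Finset.mem_filter, Finset.mem_erase]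
          constructor
          · rintro ⟨htS, hcard⟩
            have htM : t ≠ M := by
              intro h
              have hSM : S.filter (· ≤ M) = S :=
                Finset.filter_true_of_mem (fun x hx => S.le_max' x hx)
              rw [h, hSM] at hcard; omega
            have htlt : t < M := lt_of_le_of_ne (S.le_max' t htS) htM
            exact ⟨⟨htM, htS⟩, by rw [hfil t htlt]; exact hcard⟩
          · rintro ⟨⟨htM, htS⟩, hcard⟩
            have htlt : t < M := lt_of_le_of_ne (S.le_max' t htS) htM
            exact ⟨htS, by rw [← hfil t htlt]; exact hcard⟩
        rw [hkey]
        exact ih (S.erase M) (Finset.erase_ssubset hMmem) r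
          (by rw [Finset.card_erase_of_mem hMmem]; omega)

lemma rho_eq (I : Finset (ℕ × ℕ)) (j i : ℕ) :
    rhoI I j i = (((I.filter (fun p => p.2 = j)).image Prod.fst).filter (· ≤ i)).card := by
  have himg : (((I.filter (fun p => p.2 = j)).image Prod.fst).filter (· ≤ i))
      = (I.filter (fun p => p.1 ≤ i ∧ p.2 = j)).image Prod.fst := by
    ext t
    simp only [Finset.mem_filter, Finset.mem_image]
    constructor
    · rintro ⟨⟨p, ⟨hp, hpj⟩, rfl⟩, hle⟩; exact ⟨p, ⟨hp, hle, hpj⟩, rfl⟩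
    · rintro ⟨p, ⟨hp, hle, hpj⟩, rfl⟩; exact ⟨⟨p, ⟨hp, hpj⟩, rfl⟩, hle⟩
  rw [rhoI, himg, Finset.card_image_of_injOn]
  intro p hp q hq h
  simp only [coe_filter, Set.mem_setOf_eq] at hp hq
  exact Prod.ext h (by rw [hp.2.2, hq.2.2])

lemma rho_top (m n : ℕ) (I : Finset (ℕ × ℕ)) (hI : I ⊆ cornerSet m n) (j : ℕ) :
    rhoI I j m = ((I.filter (fun p => p.2 = j)).image Prod.fst).card := by
  rw [rho_eq]
  congr 1
  apply Finset.filter_true_of_mem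
  intro t ht
  simp only [Finset.mem_image, Finset.mem_filter] at ht
  obtain ⟨p, ⟨hp, _⟩, rfl⟩ := ht
  have := hI hp
  simp only [cornerSet, Finset.mem_filter, Finset.mem_product, Finset.mem_Icc] at this
  exact this.1.1.2

lemma row_count (m n : ℕ) (I : Finset (ℕ × ℕ)) (hI : I ⊆ cornerSet m n) (j rr : ℕ)
    (hr : rr ≤ rhoI I j m) :
    (I.filter (fun p => p.2 = j ∧ rhoI I j p.1 ≤ rr)).card = rr := by
  set S' := (I.filter (fun p => p.2 = j)).image Prod.fst with hS'
  have himg : (I.filter (fun p => p.2 = j ∧ rhoI I j p.1 ≤ rr)).image Prod.fst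
      = S'.filter (fun t => (S'.filter (· ≤ t)).card ≤ rr) := by
    ext t
    simp only [hS', Finset.mem_filter, Finset.mem_image]
    constructor
    · rintro ⟨p, ⟨hp, hpj, hpr⟩, rfl⟩
      exact ⟨⟨p, ⟨hp, hpj⟩, rfl⟩, by rw [← rho_eq]; exact hpr⟩
    · rintro ⟨⟨p, ⟨hp, hpj⟩, rfl⟩, hc⟩
      exact ⟨p, ⟨hp, hpj, by rw [rho_eq]; exact hc⟩, rfl⟩
  have hinj : Set.InjOn Prod.fst ((I.filter (fun p => p.2 = j ∧ rhoI I j p.1 ≤ rr) : Finset (ℕ × ℕ)) : Set (ℕ × ℕ)) := by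
    intro p hp q hq h
    simp only [coe_filter, Set.mem_setOf_eq] at hp hq
    exact Prod.ext h (by rw [hp.2.1, hq.2.1])
  rw [← Finset.card_image_of_injOn hinj, himg]
  exact rank_count S' rr (by rw [← rho_top m n I hI]; exact hr)

lemma row_count_neg (m n : ℕ) (I : Finset (ℕ × ℕ)) (hI : I ⊆ cornerSet m n) (j rr : ℕ)
    (hr : rr ≤ rhoI I j m) :
    (I.filter (fun p => p.2 = j ∧ ¬ rhoI I j p.1 ≤ rr)).card = rhoI I j m - rr := by
  have hsplit := Finset.card_filter_add_card_filter_not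
    (s := I.filter (fun p => p.2 = j)) (p := fun p => rhoI I j p.1 ≤ rr)
  rw [Finset.filter_filter, Finset.filter_filter] at hsplit
  have h1 := row_count m n I hI j rr hr
  have hcard : (I.filter (fun p => p.2 = j)).card = rhoI I j m := by
    rw [rho_top m n I hI, Finset.card_image_of_injOn]
    intro p hp q hq h
    simp only [coe_filter, Set.mem_setOf_eq] at hp hq
    exact Prod.ext h (by rw [hp.2, hq.2])
  omega

lemma sigma_eq (I : Finset (ℕ × ℕ)) (i j : ℕ) :
    sigmaI I i j = (((I.filter (fun p => p.1 = i)).image Prod.snd).filter (· ≤ j)).card := by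
  have himg : (((I.filter (fun p => p.1 = i)).image Prod.snd).filter (· ≤ j))
      = (I.filter (fun p => p.1 = i ∧ p.2 ≤ j)).image Prod.snd := by
    ext t
    simp only [Finset.mem_filter, Finset.mem_image]
    constructor
    · rintro ⟨⟨p, ⟨hp, hpi⟩, rfl⟩, hle⟩; exact ⟨p, ⟨hp, hpi, hle⟩, rfl⟩
    · rintro ⟨p, ⟨hp, hpi, hle⟩, rfl⟩; exact ⟨⟨p, ⟨hp, hpi⟩, rfl⟩, hle⟩
  rw [sigmaI, himg, Finset.card_image_of_injOn]
  intro p hp q hq h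
  simp only [coe_filter, Set.mem_setOf_eq] at hp hq
  exact Prod.ext (by rw [hp.2.1, hq.2.1]) h

lemma sigma_top (m n : ℕ) (I : Finset (ℕ × ℕ)) (hI : I ⊆ cornerSet m n) (i : ℕ) :
    sigmaI I i n = ((I.filter (fun p => p.1 = i)).image Prod.snd).card := by
  rw [sigma_eq]
  congr 1
  apply Finset.filter_true_of_mem
  intro t ht
  simp only [Finset.mem_image, Finset.mem_filter] at ht
  obtain ⟨p, ⟨hp, _⟩, rfl⟩ := ht
  have := hI hp
  simp only [cornerSet, Finset.mem_filter, Finset.mem_product, Finset.mem_Icc] at this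
  exact this.1.2.2

lemma col_count (m n : ℕ) (I : Finset (ℕ × ℕ)) (hI : I ⊆ cornerSet m n) (i cc : ℕ)
    (hc : cc ≤ sigmaI I i n) :
    (I.filter (fun p => p.1 = i ∧ sigmaI I i p.2 ≤ cc)).card = cc := by
  set S' := (I.filter (fun p => p.1 = i)).image Prod.snd with hS'
  have himg : (I.filter (fun p => p.1 = i ∧ sigmaI I i p.2 ≤ cc)).image Prod.snd
      = S'.filter (fun t => (S'.filter (· ≤ t)).card ≤ cc) := by
    ext t
    simp only [hS', Finset.mem_filter, Finset.mem_image]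
    constructor
    · rintro ⟨p, ⟨hp, hpi, hpr⟩, rfl⟩
      exact ⟨⟨p, ⟨hp, hpi⟩, rfl⟩, by rw [← sigma_eq]; exact hpr⟩
    · rintro ⟨⟨p, ⟨hp, hpi⟩, rfl⟩, hcnd⟩
      exact ⟨p, ⟨hp, hpi, by rw [sigma_eq]; exact hcnd⟩, rfl⟩
  have hinj : Set.InjOn Prod.snd ((I.filter (fun p => p.1 = i ∧ sigmaI I i p.2 ≤ cc) : Finset (ℕ × ℕ)) : Set (ℕ × ℕ)) := by
    intro p hp q hq h
    simp only [coe_filter, Set.mem_setOf_eq] at hp hq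
    exact Prod.ext (by rw [hp.2.1, hq.2.1]) h
  rw [← Finset.card_image_of_injOn hinj, himg]
  exact rank_count S' cc (by rw [← sigma_top m n I hI]; exact hc)

lemma col_count_neg (m n : ℕ) (I : Finset (ℕ × ℕ)) (hI : I ⊆ cornerSet m n) (i cc : ℕ)
    (hc : cc ≤ sigmaI I i n) :
    (I.filter (fun p => p.1 = i ∧ ¬ sigmaI I i p.2 ≤ cc)).card = sigmaI I i n - cc := by
  have hsplit := Finset.card_filter_add_card_filter_not
    (s := I.filter (fun p => p.1 = i)) (p := fun p => sigmaI I i p.2 ≤ cc)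
  rw [Finset.filter_filter, Finset.filter_filter] at hsplit
  have h1 := col_count m n I hI i cc hc
  have hcard : (I.filter (fun p => p.1 = i)).card = sigmaI I i n := by
    rw [sigma_top m n I hI, Finset.card_image_of_injOn]
    intro p hp q hq h
    simp only [coe_filter, Set.mem_setOf_eq] at hp hq
    exact Prod.ext (by rw [hp.2, hq.2]) h
  omega

lemma sum_ind (I : Finset (ℕ × ℕ)) (f : ℕ × ℕ → ℕ × ℕ)
    (hinj : Set.InjOn f I)
    (hsub : ∀ p ∈ I, f p ∈ gridG I) (P : ℕ × ℕ → Prop) [DecidablePred P] :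
    ∑ q ∈ (gridG I).filter P, (if q ∈ I.image f then 1 else 0)
      = (I.filter (fun p => P (f p))).card := by
  classical
  rw [← Finset.card_filter]
  have hset : ((gridG I).filter P).filter (fun q => q ∈ I.image f)
      = (I.filter (fun p => P (f p))).image f := by
    ext q
    simp only [Finset.mem_filter, Finset.mem_image]
    constructor
    · rintro ⟨⟨hg, hP⟩, p, hp, rfl⟩; exact ⟨p, ⟨hp, hP⟩, rfl⟩
    · rintro ⟨p, ⟨hp, hP⟩, rfl⟩; exact ⟨⟨hsub p hp, hP⟩, p, hp, rfl⟩
  rw [hset, Finset.card_image_of_injOn (hinj.mono (by intro x hx; simp only [coe_filter, Set.mem_setOf_eq] at hx; exact hx.1))]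

/-- The explicit assignment `ξ*` for `DR(1)` (one 1 per block, placed at
`(a_{i,j}, b_{i,j})`) is a solution whenever the feasibility conditions hold. -/
theorem dr1_explicit_solution (m n : ℕ) (hm2 : m % 2 = 0) (hn2 : n % 2 = 0)
    (hm : 0 < m) (hn : 0 < n)
    (I : Finset (ℕ × ℕ)) (hI : I ⊆ cornerSet m n) (r c : ℕ → ℕ)
    (hdata : ∀ p ∈ I, r p.2 + r (p.2 + 1) = rhoI I p.2 m ∧
      c p.1 + c (p.1 + 1) = sigmaI I p.1 n) :
    IsDRSol I r c 1 (fun q =>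
      if q ∈ I.image (fun p =>
          ((if sigmaI I p.1 p.2 ≤ c p.1 then p.1 else p.1 + 1),
           (if rhoI I p.2 p.1 ≤ r p.2 then p.2 else p.2 + 1)))
      then 1 else 0) := by
  classical
  set f : ℕ × ℕ → ℕ × ℕ := fun p =>
      ((if sigmaI I p.1 p.2 ≤ c p.1 then p.1 else p.1 + 1),
       (if rhoI I p.2 p.1 ≤ r p.2 then p.2 else p.2 + 1)) with hf
  have hodd : ∀ p ∈ I, p.1 % 2 = 1 ∧ p.2 % 2 = 1 := by
    intro p hp
    have := hI hp
    simp only [cornerSet, Finset.mem_filter, Finset.mem_product, Finset.mem_Icc] at this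
    exact this.2
  have hf1 : ∀ p, (f p).1 = p.1 ∨ (f p).1 = p.1 + 1 := by
    intro p; simp only [hf]; split <;> simp
  have hf2 : ∀ p, (f p).2 = p.2 ∨ (f p).2 = p.2 + 1 := by
    intro p; simp only [hf]; split <;> simp
  have hmemblock : ∀ p ∈ I, f p ∈ block2 p.1 p.2 := by
    intro p hp
    have h1 := hf1 p; have h2 := hf2 p
    simp only [block2, Finset.mem_insert, Finset.mem_singleton, Prod.ext_iff]
    rcases h1 with h1 | h1 <;> rcases h2 with h2 | h2 <;> tauto
  have hblockdisj : ∀ p ∈ I, ∀ q ∈ I, f p ∈ block2 q.1 q.2 → p = q := by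
    intro p hp q hq hmem
    obtain ⟨hp1, hp2⟩ := hodd p hp
    obtain ⟨hq1, hq2⟩ := hodd q hq
    have h1 := hf1 p; have h2 := hf2 p
    have hmem' : ((f p).1 = q.1 ∨ (f p).1 = q.1 + 1) ∧ ((f p).2 = q.2 ∨ (f p).2 = q.2 + 1) := by
      simp only [block2, Finset.mem_insert, Finset.mem_singleton] at hmem
      rcases hmem with h | h | h | h <;> rw [h] <;> simp
    obtain ⟨hm1, hm2⟩ := hmem'
    generalize hA : (f p).1 = A at h1 hm1
    generalize hB : (f p).2 = B at h2 hm2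
    exact Prod.ext (by omega) (by omega)
  have hinj : Set.InjOn f I := by
    intro p hp q hq h
    exact hblockdisj p hp q hq (h ▸ hmemblock q hq)
  have hsub : ∀ p ∈ I, f p ∈ gridG I := by
    intro p hp
    exact Finset.mem_biUnion.mpr ⟨p, hp, hmemblock p hp⟩
  refine ⟨?_, ?_, ?_, ?_⟩
  · intro p _; dsimp only; split <;> omega
  · -- row sums
    intro j hj l hl
    obtain ⟨p₀, hp₀, hp₀j⟩ := Finset.mem_image.mp hj
    have hdat := (hdata p₀ hp₀).1
    rw [hp₀j] at hdat
    have hjodd : j % 2 = 1 := hp₀j ▸ (hodd p₀ hp₀).2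
    have hrle : r j ≤ rhoI I j m := by omega
    rw [sum_ind I f hinj hsub]
    simp only [Finset.mem_insert, Finset.mem_singleton] at hl
    rcases hl with rfl | rfl
    · have hchar : I.filter (fun p => (f p).2 = j + 0)
          = I.filter (fun p => p.2 = j ∧ rhoI I j p.1 ≤ r j) := by
        apply Finset.filter_congr
        intro p hp
        have hpodd := (hodd p hp).2
        simp only [hf, Nat.add_zero]
        split <;> rename_i h
        · constructor
          · rintro rfl; exact ⟨rfl, h⟩
          · rintro ⟨rfl, _⟩; rfl
        · constructor
          · intro he; omega
          · rintro ⟨rfl, hle⟩; exact absurd hle h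
      rw [hchar, row_count m n I hI j (r j) hrle]
      rfl
    · have hchar : I.filter (fun p => (f p).2 = j + 1)
          = I.filter (fun p => p.2 = j ∧ ¬ rhoI I j p.1 ≤ r j) := by
        apply Finset.filter_congr
        intro p hp
        have hpodd := (hodd p hp).2
        simp only [hf]
        split <;> rename_i h
        · constructor
          · intro he; omega
          · rintro ⟨rfl, hle⟩; exact absurd h hle
        · constructor
          · intro he; have : p.2 = j := by omega
            exact ⟨this, this ▸ h⟩
          · rintro ⟨rfl, _⟩; rfl
      rw [hchar, row_count_neg m n I hI j (r j) hrle]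
      omega
  · -- column sums
    intro i hi l hl
    obtain ⟨p₀, hp₀, hp₀i⟩ := Finset.mem_image.mp hi
    have hdat := (hdata p₀ hp₀).2
    rw [hp₀i] at hdat
    have hiodd : i % 2 = 1 := hp₀i ▸ (hodd p₀ hp₀).1
    have hcle : c i ≤ sigmaI I i n := by omega
    rw [sum_ind I f hinj hsub]
    simp only [Finset.mem_insert, Finset.mem_singleton] at hl
    rcases hl with rfl | rfl
    · have hchar : I.filter (fun p => (f p).1 = i + 0)
          = I.filter (fun p => p.1 = i ∧ sigmaI I i p.2 ≤ c i) := by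
        apply Finset.filter_congr
        intro p hp
        have hpodd := (hodd p hp).1
        simp only [hf, Nat.add_zero]
        split <;> rename_i h
        · constructor
          · rintro rfl; exact ⟨rfl, h⟩
          · rintro ⟨rfl, _⟩; rfl
        · constructor
          · intro he; omega
          · rintro ⟨rfl, hle⟩; exact absurd hle h
      rw [hchar, col_count m n I hI i (c i) hcle]
      rfl
    · have hchar : I.filter (fun p => (f p).1 = i + 1)
          = I.filter (fun p => p.1 = i ∧ ¬ sigmaI I i p.2 ≤ c i) := by
        apply Finset.filter_congr
        intro p hp
        have hpodd := (hodd p hp).1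
        simp only [hf]
        split <;> rename_i h
        · constructor
          · intro he; omega
          · rintro ⟨rfl, hle⟩; exact absurd h hle
        · constructor
          · intro he; have : p.1 = i := by omega
            exact ⟨this, this ▸ h⟩
          · rintro ⟨rfl, _⟩; rfl
      rw [hchar, col_count_neg m n I hI i (c i) hcle]
      omega
  · -- block sums
    intro p hp
    rw [← Finset.card_filter]
    have hset : (block2 p.1 p.2).filter (fun q => q ∈ I.image f) = {f p} := by
      ext q
      simp only [Finset.mem_filter, Finset.mem_image, Finset.mem_singleton]
      constructor
      · rintro ⟨hqb, p', hp', rfl⟩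
        rw [hblockdisj p' hp' p hp hqb]
      · rintro rfl
        exact ⟨hmemblock p hp, p, hp, rfl⟩
    rw [hset, Finset.card_singleton]
end
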